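/- For a category C with pullbacks, a span x ← s → y whose left leg is an identity (i.e., a span of the form (id_x, f)) is a left adjoint (a 'map') in the bicategory Span(C): its right adjoint is the reversed span y ← x → x given by (f, id_x), with unit and counit 2-cells induced by the diagonal and the pullback projections, satisfying the triangle identities. -/

import Mathlib

/-!
A 2-cell `θ : S ⇒ T` of spans satisfies `θ.hom ≫ T.left = S.left`, so when `T.left` is monic
there is at most one 2-cell `S ⇒ T`. Both triangle composites are 2-cells from a span with an
identity leg to itself, so each must be the identity 2-cell.
-/

open CategoryTheory CategoryTheory.Limits

namespace SpanMap

variable {C : Type*} [Category C] [HasPullbacks C]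

/-- A span from `x` to `y`: a 1-cell of the bicategory `Span(C)`. -/
structure SpanHom (x y : C) where
  apex : C
  left : apex ⟶ x
  right : apex ⟶ y

/-- A 2-cell of `Span(C)`. -/
structure SpanTwoCell {x y : C} (S T : SpanHom x y) where
  hom : S.apex ⟶ T.apex
  wl : hom ≫ T.left = S.left
  wr : hom ≫ T.right = S.right

/-- The identity span. -/
def idSpan (a : C) : SpanHom a a := ⟨a, 𝟙 a, 𝟙 a⟩

/-- Composition of spans, by pullback. -/
noncomputable def spanComp {a b c : C} (S : SpanHom a b) (T : SpanHom b c) :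
    SpanHom a c :=
  ⟨pullback S.right T.left,
    pullback.fst S.right T.left ≫ S.left,
    pullback.snd S.right T.left ≫ T.right⟩

/-- Identity 2-cell. -/
def id2 {x y : C} (S : SpanHom x y) : SpanTwoCell S S :=
  ⟨𝟙 S.apex, by simp, by simp⟩

/-- Vertical composition of 2-cells. -/
def vcomp {x y : C} {S T U : SpanHom x y} (θ : SpanTwoCell S T)
    (σ : SpanTwoCell T U) : SpanTwoCell S U :=
  ⟨θ.hom ≫ σ.hom, by rw [Category.assoc, σ.wl, θ.wl],
    by rw [Category.assoc, σ.wr, θ.wr]⟩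

/-- Right whiskering of a 2-cell with a span. -/
noncomputable def whiskerR {a b c : C} {S S' : SpanHom a b} (θ : SpanTwoCell S S')
    (T : SpanHom b c) : SpanTwoCell (spanComp S T) (spanComp S' T) where
  hom := pullback.lift (pullback.fst S.right T.left ≫ θ.hom)
    (pullback.snd S.right T.left)
    (by erw [Category.assoc, θ.wr]; exact pullback.condition)
  wl := by
    show _ ≫ pullback.fst S'.right T.left ≫ S'.left = pullback.fst S.right T.left ≫ S.left
    erw [← Category.assoc, pullback.lift_fst, Category.assoc, θ.wl]
  wr := by
    show _ ≫ pullback.snd S'.right T.left ≫ T.right = pullback.snd S.right T.left ≫ T.right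
    erw [← Category.assoc, pullback.lift_snd]

/-- Left whiskering of a span with a 2-cell. -/
noncomputable def whiskerL {a b c : C} (S : SpanHom a b) {T T' : SpanHom b c}
    (θ : SpanTwoCell T T') : SpanTwoCell (spanComp S T) (spanComp S T') where
  hom := pullback.lift (pullback.fst S.right T.left)
    (pullback.snd S.right T.left ≫ θ.hom)
    (by erw [Category.assoc, θ.wl]; exact pullback.condition)
  wl := by
    show _ ≫ pullback.fst S.right T'.left ≫ S.left = pullback.fst S.right T.left ≫ S.left
    erw [← Category.assoc, pullback.lift_fst]
  wr := by
    show _ ≫ pullback.snd S.right T'.left ≫ T'.right = pullback.snd S.right T.left ≫ T.right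
    erw [← Category.assoc, pullback.lift_snd, Category.assoc, θ.wr]

/-- Left unitor. -/
noncomputable def lunit {a b : C} (S : SpanHom a b) :
    SpanTwoCell (spanComp (idSpan a) S) S where
  hom := pullback.snd (idSpan a).right S.left
  wl := by
    show pullback.snd (𝟙 a) S.left ≫ S.left = pullback.fst (𝟙 a) S.left ≫ 𝟙 a
    erw [← pullback.condition]
  wr := rfl

/-- Inverse of the left unitor. -/
noncomputable def lunitInv {a b : C} (S : SpanHom a b) :
    SpanTwoCell S (spanComp (idSpan a) S) where
  hom := pullback.lift S.left (𝟙 S.apex) (by simp [idSpan])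
  wl := by
    dsimp only [spanComp, idSpan]
    simp
    erw [pullback.lift_fst]
  wr := by
    dsimp only [spanComp, idSpan]
    erw [← Category.assoc, pullback.lift_snd, Category.id_comp]

/-- Right unitor. -/
noncomputable def runit {a b : C} (S : SpanHom a b) :
    SpanTwoCell (spanComp S (idSpan b)) S where
  hom := pullback.fst S.right (idSpan b).left
  wl := rfl
  wr := by
    show pullback.fst S.right (𝟙 b) ≫ S.right = pullback.snd S.right (𝟙 b) ≫ 𝟙 b
    erw [pullback.condition]

/-- Inverse of the right unitor. -/
noncomputable def runitInv {a b : C} (S : SpanHom a b) :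
    SpanTwoCell S (spanComp S (idSpan b)) where
  hom := pullback.lift (𝟙 S.apex) S.right (by simp [idSpan])
  wl := by
    dsimp only [spanComp, idSpan]
    erw [← Category.assoc, pullback.lift_fst, Category.id_comp]
  wr := by
    dsimp only [spanComp, idSpan]
    simp
    erw [pullback.lift_snd]

/-- Associator 2-cell. -/
noncomputable def assocHom {a b c d : C} (S : SpanHom a b) (T : SpanHom b c)
    (U : SpanHom c d) :
    SpanTwoCell (spanComp (spanComp S T) U) (spanComp S (spanComp T U)) where
  hom := pullback.lift
    (pullback.fst (spanComp S T).right U.left ≫ pullback.fst S.right T.left)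
    (pullback.lift
      (pullback.fst (spanComp S T).right U.left ≫ pullback.snd S.right T.left)
      (pullback.snd (spanComp S T).right U.left)
      (by erw [Category.assoc]; exact pullback.condition))
    (by
      dsimp only [spanComp]
      erw [Category.assoc, pullback.condition]
      conv_rhs => erw [← Category.assoc, pullback.lift_fst]
      erw [Category.assoc])
  wl := by
    dsimp only [spanComp]
    erw [← Category.assoc, pullback.lift_fst, Category.assoc]
  wr := by
    dsimp only [spanComp]
    erw [← Category.assoc, pullback.lift_snd, ← Category.assoc, pullback.lift_snd]

/-- Inverse associator 2-cell. -/
noncomputable def assocInv {a b c d : C} (S : SpanHom a b) (T : SpanHom b c)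
    (U : SpanHom c d) :
    SpanTwoCell (spanComp S (spanComp T U)) (spanComp (spanComp S T) U) where
  hom := pullback.lift
    (pullback.lift
      (pullback.fst S.right (spanComp T U).left)
      (pullback.snd S.right (spanComp T U).left ≫ pullback.fst T.right U.left)
      (by erw [Category.assoc]; exact pullback.condition))
    (pullback.snd S.right (spanComp T U).left ≫ pullback.snd T.right U.left)
    (by
      dsimp only [spanComp]
      conv_lhs => erw [← Category.assoc, pullback.lift_snd]
      erw [Category.assoc, pullback.condition, Category.assoc])
  wl := by
    dsimp only [spanComp]
    erw [← Category.assoc, pullback.lift_fst, ← Category.assoc, pullback.lift_fst]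
  wr := by
    dsimp only [spanComp]
    erw [← Category.assoc, pullback.lift_snd, Category.assoc]

variable {x y : C} (f : x ⟶ y)

/-- The span `x ← x → y` with identity left leg: the image of `f` under the
canonical functor `C → Span(C)`. -/
def leftLeg : SpanHom x y := ⟨x, 𝟙 x, f⟩

/-- The reversed span `y ← x → x`, the claimed right adjoint. -/
def rightLeg : SpanHom y x := ⟨x, f, 𝟙 x⟩

/-- Unit 2-cell, induced by the diagonal. -/
noncomputable def adjUnit : SpanTwoCell (idSpan x) (spanComp (leftLeg f) (rightLeg f)) where
  hom := pullback.lift (𝟙 x) (𝟙 x) rfl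
  wl := by
    dsimp only [spanComp, idSpan, leftLeg, rightLeg]
    simp
    erw [pullback.lift_fst]
  wr := by
    dsimp only [spanComp, idSpan, leftLeg, rightLeg]
    simp
    erw [pullback.lift_snd]

/-- Counit 2-cell, induced by the pullback projections. -/
noncomputable def adjCounit : SpanTwoCell (spanComp (rightLeg f) (leftLeg f)) (idSpan y) where
  hom := pullback.fst (rightLeg f).right (leftLeg f).left ≫ f
  wl := by
    dsimp only [spanComp, idSpan, leftLeg, rightLeg]
    simp
  wr := by
    dsimp only [spanComp, idSpan, leftLeg, rightLeg]
    have h : pullback.fst (𝟙 x) (𝟙 x) = pullback.snd (𝟙 x) (𝟙 x) := by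
      simpa using pullback.condition (f := 𝟙 x) (g := 𝟙 x)
    rw [Category.comp_id, h]

end SpanMap

namespace SpanMap

variable {C : Type*} [Category C]

section

variable {x y : C}

theorem SpanTwoCell.ext {S T : SpanHom x y} {θ σ : SpanTwoCell S T} (h : θ.hom = σ.hom) :
    θ = σ := by
  cases θ; cases σ; cases h; rfl

instance SpanTwoCell.subsingleton_of_mono_left {S T : SpanHom x y} [Mono T.left] :
    Subsingleton (SpanTwoCell S T) :=
  ⟨fun θ σ => SpanTwoCell.ext <| (cancel_mono T.left).1 (θ.wl.trans σ.wl.symm)⟩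

instance SpanTwoCell.subsingleton_of_mono_right {S T : SpanHom x y} [Mono T.right] :
    Subsingleton (SpanTwoCell S T) :=
  ⟨fun θ σ => SpanTwoCell.ext <| (cancel_mono T.right).1 (θ.wr.trans σ.wr.symm)⟩

end

variable [HasPullbacks C] {x y : C} (f : x ⟶ y)

instance mono_leftLeg_left : Mono (leftLeg f).left :=
  inferInstanceAs (Mono (𝟙 x))

instance mono_rightLeg_right : Mono (rightLeg f).right :=
  inferInstanceAs (Mono (𝟙 x))

/-- for a category `C` with pullbacks, the span `(id_x, f)` is a
left adjoint (a map) in `Span(C)`, with right adjoint the reversed span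
`(f, id_x)`; the unit and counit induced by the diagonal and the pullback
projections satisfy the triangle identities. -/
theorem spanOfHom_is_map :
    vcomp (lunitInv (leftLeg f))
      (vcomp (whiskerR (adjUnit f) (leftLeg f))
        (vcomp (assocHom (leftLeg f) (rightLeg f) (leftLeg f))
          (vcomp (whiskerL (leftLeg f) (adjCounit f)) (runit (leftLeg f))))) =
      id2 (leftLeg f) ∧
    vcomp (runitInv (rightLeg f))
      (vcomp (whiskerL (rightLeg f) (adjUnit f))
        (vcomp (assocInv (rightLeg f) (leftLeg f) (rightLeg f))
          (vcomp (whiskerR (adjCounit f) (rightLeg f)) (lunit (rightLeg f))))) =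
      id2 (rightLeg f) :=
  ⟨Subsingleton.elim _ _, Subsingleton.elim _ _⟩

end SpanMap
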